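/- Let (G, 𝒫, 𝒯) be an instance of Partitioned Vertex Cover with solution U, let H be the Popular Matching instance constructed from (G, 𝒫, 𝒯), and let M* be the matching in H constructed from U. Then there is no alternating cycle in H_{M*} that contains a vertex u^e_i for any edge e of G and endpoint i of e. -/

import Mathlib

open SimpleGraph

universe u

/-- A matching: a set of edges of `G` that are pairwise vertex-disjoint. -/
def IsMatching {W : Type u} (G : SimpleGraph W) (M : Set (Sym2 W)) : Prop :=
  M ⊆ G.edgeSet ∧ ∀ e ∈ M, ∀ e' ∈ M, e ≠ e' → ∀ v : W, v ∈ e → v ∉ e'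

/-- `v` is matched by `M`. -/
def Matched {W : Type u} (M : Set (Sym2 W)) (v : W) : Prop := ∃ w : W, s(v, w) ∈ M

open scoped Classical in
/-- `rank G pref M v = pref v (M(v))`, with the convention `|N(v)|+1` if `v` is unmatched. -/
noncomputable def rank {W : Type u} (G : SimpleGraph W) (pref : W → W → ℕ)
    (M : Set (Sym2 W)) (v : W) : ℕ :=
  if h : ∃ w : W, s(v, w) ∈ M then pref v h.choose else (G.neighborSet v).ncard + 1

/-- The number of vertices preferring `M` over `M'`. -/
noncomputable def vote {W : Type u} (G : SimpleGraph W) (pref : W → W → ℕ)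
    (M M' : Set (Sym2 W)) : ℕ :=
  {v : W | rank G pref M v < rank G pref M' v}.ncard

/-- A popular matching: no other matching is more popular. -/
def IsPopular {W : Type u} (G : SimpleGraph W) (pref : W → W → ℕ) (M : Set (Sym2 W)) : Prop :=
  IsMatching G M ∧
    ∀ M' : Set (Sym2 W), IsMatching G M' → vote G pref M' M ≤ vote G pref M M'

/-- Each vertex has a strict preference list: `pref v` is a bijection from the
neighborhood of `v` onto `{1, …, |N(v)|}`. -/
def HasPref {W : Type u} (G : SimpleGraph W) (pref : W → W → ℕ) : Prop :=
  ∀ v : W, Set.BijOn (pref v) (G.neighborSet v) (Set.Icc 1 (G.neighborSet v).ncard)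

/-- The edge `e ∉ M` is labeled `+2` by `label_M` (given rank function `rk`):
both endpoints prefer each other over their status in `M`. -/
def EdgePlus {W : Type u} (pref : W → W → ℕ) (rk : W → ℕ) (e : Sym2 W) : Prop :=
  ∃ x y : W, e = s(x, y) ∧ pref x y < rk x ∧ pref y x < rk y

/-- The edge `e ∉ M` is labeled `-2` by `label_M` (given rank function `rk`):
both endpoints prefer their status in `M` over each other. -/
def EdgeMinus {W : Type u} (pref : W → W → ℕ) (rk : W → ℕ) (e : Sym2 W) : Prop :=
  ∃ x y : W, e = s(x, y) ∧ rk x < pref x y ∧ rk y < pref y x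

/-- The graph `G_M`: the spanning subgraph of `G` consisting of the edges of `M`
together with the edges not labeled `-2`. -/
def GMgraph {W : Type u} (G : SimpleGraph W) (pref : W → W → ℕ) (M : Set (Sym2 W)) :
    SimpleGraph W where
  Adj x y := G.Adj x y ∧ (s(x, y) ∈ M ∨ ¬ EdgeMinus pref (rank G pref M) s(x, y))
  symm := by
    constructor
    intro x y h
    refine ⟨h.1.symm, ?_⟩
    rw [Sym2.eq_swap]
    exact h.2
  loopless := ⟨fun x h => G.loopless.irrefl x h.1⟩

/-- Consecutive edges alternate between `M` and non-`M`. -/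
def altRel {W : Type u} (M : Set (Sym2 W)) (e e' : Sym2 W) : Prop := e ∈ M ↔ e' ∉ M

/-- An alternating path (with respect to `M`) in a graph `G'`. -/
def IsAltPath {W : Type u} (M : Set (Sym2 W)) {G' : SimpleGraph W} {x y : W}
    (p : G'.Walk x y) : Prop :=
  p.IsPath ∧ List.Chain' (altRel M) p.edges ∧
    (∀ e, p.edges.head? = some e → e ∉ M → ¬ Matched M x) ∧
    (∀ e, p.edges.getLast? = some e → e ∉ M → ¬ Matched M y)

/-- An alternating cycle (with respect to `M`) in a graph `G'`:
the edges alternate cyclically between `M` and non-`M`. -/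
def IsAltCycle {W : Type u} (M : Set (Sym2 W)) {G' : SimpleGraph W} {x : W}
    (p : G'.Walk x x) : Prop :=
  p.IsCycle ∧ List.Chain' (altRel M) (p.edges ++ p.edges.take 1)

/-- `l` contains at least one edge labeled `+2`. -/
def OnePlusEdge {W : Type u} (pref : W → W → ℕ) (rk : W → ℕ) (l : List (Sym2 W)) : Prop :=
  ∃ e ∈ l, EdgePlus pref rk e

/-- `l` contains at least two edges labeled `+2`. -/
def TwoPlusEdges {W : Type u} (pref : W → W → ℕ) (rk : W → ℕ) (l : List (Sym2 W)) : Prop :=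
  ∃ e ∈ l, ∃ e' ∈ l, e ≠ e' ∧ EdgePlus pref rk e ∧ EdgePlus pref rk e'

/-- A vertex cover. -/
def IsVC {V : Type u} (G : SimpleGraph V) (U : Set V) : Prop :=
  ∀ ⦃x y : V⦄, G.Adj x y → x ∈ U ∨ y ∈ U
/-- An instance of Partitioned Vertex Cover: `G` is a finite simple graph, `P` is a
collection of pairwise disjoint edges of `G`, `T` is a collection of pairwise disjoint
3-element vertex sets each inducing a triangle in `G`, and every vertex of `G` lies in
exactly one member of `P ∪ T`. -/
def IsPVC {V : Type u} (G : SimpleGraph V) (P : Set (Sym2 V)) (T : Set (Finset V)) : Prop :=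
  Finite V ∧
  P ⊆ G.edgeSet ∧
  (∀ e ∈ P, ∀ e' ∈ P, e ≠ e' → ∀ v : V, v ∈ e → v ∉ e') ∧
  (∀ t ∈ T, t.card = 3) ∧
  (∀ t ∈ T, ∀ x ∈ t, ∀ y ∈ t, x ≠ y → G.Adj x y) ∧
  (∀ t ∈ T, ∀ t' ∈ T, t ≠ t' → ∀ v : V, v ∈ t → v ∉ t') ∧
  (∀ v : V, (∃ e ∈ P, v ∈ e) ∨ (∃ t ∈ T, v ∈ t)) ∧
  (∀ v : V, ¬ ((∃ e ∈ P, v ∈ e) ∧ (∃ t ∈ T, v ∈ t)))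

/-- A solution of a Partitioned Vertex Cover instance: a vertex cover `U` with
`|U ∩ P| = 1` for every pair `P` and `|U ∩ T| = 2` for every triple `T`. -/
def IsPVCSolution {V : Type u} (G : SimpleGraph V) (P : Set (Sym2 V)) (T : Set (Finset V))
    (U : Set V) : Prop :=
  IsVC G U ∧
  (∀ e ∈ P, {x : V | x ∈ e ∧ x ∈ U}.ncard = 1) ∧
  (∀ t ∈ T, {x : V | x ∈ t ∧ x ∈ U}.ncard = 2)

/-- The vertices of the graph `H` built from a Partitioned Vertex Cover instance:
`a i`, `b i`, `c i`, `d i` for a vertex `i` of `G`; `u i j` is the vertex `u^e_i` for the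
edge `e = {i,j}` of `G`; `f i j` is the vertex `f_{ij}` for the pair `{i,j} ∈ P`. -/
inductive Gad (V : Type u) : Type u where
  | a : V → Gad V
  | b : V → Gad V
  | c : V → Gad V
  | d : V → Gad V
  | u : V → V → Gad V
  | f : V → V → Gad V
deriving DecidableEq

/-- Which formal gadget vertices are really vertices of `H`. -/
def Gad.valid {V : Type u} (G : SimpleGraph V) (P : Set (Sym2 V)) : Gad V → Prop
  | .u i j => G.Adj i j
  | .f i j => s(i, j) ∈ P
  | _ => True

/-- The edges of `H`, up to symmetry. -/
inductive HBase {V : Type u} (G : SimpleGraph V) (P : Set (Sym2 V)) (T : Set (Finset V)) :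
    Gad V → Gad V → Prop where
  | da (i : V) : HBase G P T (.d i) (.a i)
  | ab (i : V) : HBase G P T (.a i) (.b i)
  | ac (i : V) : HBase G P T (.a i) (.c i)
  | bc (i : V) : HBase G P T (.b i) (.c i)
  | uu {i j : V} (h : G.Adj i j) : HBase G P T (.u i j) (.u j i)
  | bu {i j : V} (h : G.Adj i j) : HBase G P T (.b i) (.u i j)
  | df {i j : V} (h : s(i, j) ∈ P) : HBase G P T (.d i) (.f i j)
  | fc {i j : V} (h : s(i, j) ∈ P) : HBase G P T (.f i j) (.c j)
  | cd {i j : V} (h : s(i, j) ∈ P) : HBase G P T (.c i) (.d j)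
  | dd {i j : V} {t : Finset V} (ht : t ∈ T) (hi : i ∈ t) (hj : j ∈ t) (hne : i ≠ j) :
      HBase G P T (.d i) (.d j)
  | cc {i j : V} {t : Finset V} (ht : t ∈ T) (hi : i ∈ t) (hj : j ∈ t) (hne : i ≠ j) :
      HBase G P T (.c i) (.c j)

/-- The graph `H` of the Popular Matching instance built from `(G, P, T)`. -/
def Hgraph {V : Type u} (G : SimpleGraph V) (P : Set (Sym2 V)) (T : Set (Finset V)) :
    SimpleGraph {g : Gad V // Gad.valid G P g} where
  Adj x y := x ≠ y ∧ (HBase G P T x.1 y.1 ∨ HBase G P T y.1 x.1)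
  symm := ⟨fun _ _ h => ⟨h.1.symm, h.2.symm⟩⟩
  loopless := ⟨fun _ h => h.1 rfl⟩

/-- The Popular Matching instance (graph together with preference lists) constructed
from a Partitioned Vertex Cover instance `(G, P, T)`.  The field `pref` gives the
preference lists; all its values on the neighborhoods in `H` are pinned down, except
the ranks that `b i` assigns to the vertices `u^e_i`, which form an arbitrary fixed
bijection onto `{2, …, deg_G(i) + 1}`. -/
structure Reduction (V : Type u) [LinearOrder V] : Type u where
  G : SimpleGraph V
  P : Set (Sym2 V)
  T : Set (Finset V)
  ispvc : IsPVC G P T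
  pref : Gad V → Gad V → ℕ
  pref_ab : ∀ i : V, pref (.a i) (.b i) = 1
  pref_ac : ∀ i : V, pref (.a i) (.c i) = 2
  pref_ad : ∀ i : V, pref (.a i) (.d i) = 3
  pref_ba : ∀ i : V, pref (.b i) (.a i) = 1
  pref_bu : ∀ i : V, Set.BijOn (pref (.b i)) {g : Gad V | ∃ j : V, G.Adj i j ∧ g = .u i j}
      (Set.Icc 2 ((G.neighborSet i).ncard + 1))
  pref_bc : ∀ i : V, pref (.b i) (.c i) = (G.neighborSet i).ncard + 2
  pref_ca : ∀ i : V, pref (.c i) (.a i) = 1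
  pref_cb : ∀ i : V, pref (.c i) (.b i) = 2
  pref_da : ∀ i : V, pref (.d i) (.a i) = 1
  pref_uu : ∀ i j : V, G.Adj i j → pref (.u i j) (.u j i) = 1
  pref_ub : ∀ i j : V, G.Adj i j → pref (.u i j) (.b i) = 2
  pref_cf : ∀ i j : V, s(i, j) ∈ P → pref (.c i) (.f j i) = 3
  pref_cd : ∀ i j : V, s(i, j) ∈ P → pref (.c i) (.d j) = 4
  pref_dc : ∀ i j : V, s(i, j) ∈ P → pref (.d i) (.c j) = 2
  pref_df : ∀ i j : V, s(i, j) ∈ P → pref (.d i) (.f i j) = 3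
  pref_fd : ∀ i j : V, s(i, j) ∈ P → pref (.f i j) (.d i) = 1
  pref_fc : ∀ i j : V, s(i, j) ∈ P → pref (.f i j) (.c j) = 2
  pref_tri : ∀ t ∈ T, ∀ i j k : V, t = {i, j, k} → i < j → j < k →
    pref (.c i) (.c k) = 3 ∧ pref (.c i) (.c j) = 4 ∧
    pref (.c j) (.c i) = 3 ∧ pref (.c j) (.c k) = 4 ∧
    pref (.c k) (.c j) = 3 ∧ pref (.c k) (.c i) = 4 ∧
    pref (.d i) (.d j) = 2 ∧ pref (.d i) (.d k) = 3 ∧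
    pref (.d j) (.d k) = 2 ∧ pref (.d j) (.d i) = 3 ∧
    pref (.d k) (.d i) = 2 ∧ pref (.d k) (.d j) = 3

namespace Reduction

variable {V : Type u} [LinearOrder V] (R : Reduction V)

/-- The vertex set of `H`. -/
abbrev HV : Type u := {g : Gad V // Gad.valid R.G R.P g}

/-- The graph `H`. -/
def H : SimpleGraph R.HV := Hgraph R.G R.P R.T

/-- The preference lists of `H`, as a function on its vertices. -/
def prefH : R.HV → R.HV → ℕ := fun x y => R.pref x.1 y.1

/-- The vertex `a_i` of `H`. -/
def va (i : V) : R.HV := ⟨.a i, trivial⟩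
/-- The vertex `b_i` of `H`. -/
def vb (i : V) : R.HV := ⟨.b i, trivial⟩
/-- The vertex `c_i` of `H`. -/
def vc (i : V) : R.HV := ⟨.c i, trivial⟩
/-- The vertex `d_i` of `H`. -/
def vd (i : V) : R.HV := ⟨.d i, trivial⟩
/-- The vertex `u^e_i` of `H`, for an edge `e = {i,j}` of `G`. -/
def vu (i j : V) (h : R.G.Adj i j) : R.HV := ⟨.u i j, h⟩
/-- The vertex `f_{ij}` of `H`, for a pair `{i,j} ∈ P`. -/
def vf (i j : V) (h : s(i, j) ∈ R.P) : R.HV := ⟨.f i j, h⟩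

/-- The matching `M*` in `H` constructed from a solution `U`. -/
def Mstar (U : Set V) : Set (Sym2 R.HV) :=
  {e : Sym2 R.HV |
    (∃ (i j : V) (h : R.G.Adj i j), e = s(R.vu i j h, R.vu j i h.symm)) ∨
    (∃ (x y : V) (h : s(x, y) ∈ R.P) (h' : s(y, x) ∈ R.P), x ∉ U ∧ y ∈ U ∧
      (e = s(R.va x, R.vd x) ∨ e = s(R.vb x, R.vc x) ∨ e = s(R.va y, R.vb y) ∨
       e = s(R.vf x y h, R.vc y) ∨ e = s(R.vf y x h', R.vd y))) ∨
    (∃ t ∈ R.T, ∃ x y z : V, t = {x, y, z} ∧ x ∉ U ∧ y ∈ U ∧ z ∈ U ∧ y ≠ z ∧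
      R.pref (.d x) (.d y) < R.pref (.d x) (.d z) ∧
      (e = s(R.va x, R.vd x) ∨ e = s(R.vb x, R.vc x) ∨ e = s(R.va y, R.vb y) ∨
       e = s(R.va z, R.vb z) ∨ e = s(R.vc y, R.vc z) ∨ e = s(R.vd y, R.vd z)))}

end Reduction

/-- The vertex set of the Pair Selector gadget associated with a pair `{i,j}`. -/
def pairGadget {V : Type u} (i j : V) : Set (Gad V) :=
  {g : Gad V | ∃ x : V, (x = i ∨ x = j) ∧ (g = .a x ∨ g = .b x ∨ g = .c x ∨ g = .d x)} ∪
    {Gad.f i j, Gad.f j i}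

/-- The vertex set of the Triple Selector gadget associated with a triple `t`. -/
def tripleGadget {V : Type u} (t : Finset V) : Set (Gad V) :=
  {g : Gad V | ∃ x ∈ t, g = .a x ∨ g = .b x ∨ g = .c x ∨ g = .d x}

/-!
The only neighbours of `u^e_i` in `H` are `u^e_j` and `b_i`, so a cycle of `H_{M*}` through
`u^e_i` also passes through `u^e_j` and uses both edges `{u^e_i, b_i}` and `{u^e_j, b_j}`.
As `U` is a vertex cover, one endpoint, say `i`, lies in `U`. Then `M*` contains `{a_i, b_i}`
and `{u^e_i, u^e_j}`, so `b_i` and `u^e_i` both get their first choice and `{u^e_i, b_i}` is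
labeled `-2`, i.e. it is not an edge of `H_{M*}`.
-/

theorem SimpleGraph.Walk.IsCycle.adj_of_neighborSet_subset_pair {W : Type u}
    {G : SimpleGraph W} {x v y z : W} {p : G.Walk x x} (hp : p.IsCycle) (hv : v ∈ p.support)
    (hN : G.neighborSet v ⊆ {y, z}) : G.Adj v y ∧ y ∈ p.support := by
  have hN' : p.toSubgraph.neighborSet v = {y, z} :=
    Set.eq_of_subset_of_ncard_le ((p.toSubgraph.neighborSet_subset v).trans hN)
      ((Set.ncard_insert_le y {z}).trans (by simp [hp.ncard_neighborSet_toSubgraph_eq_two hv]))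
  have hy : p.toSubgraph.Adj v y := by
    rw [← Subgraph.mem_neighborSet, hN']
    exact Set.mem_insert y {z}
  exact ⟨hy.adj_sub, p.mem_verts_toSubgraph.mp hy.snd_mem⟩

theorem Finset.exists_lt_lt_eq_of_card_eq_three {α : Type*} [LinearOrder α] {t : Finset α}
    (ht : t.card = 3) : ∃ p q r, p < q ∧ q < r ∧ t = {p, q, r} := by
  have hf := (t.orderEmbOfFin ht).strictMono
  refine ⟨t.orderEmbOfFin ht 0, t.orderEmbOfFin ht 1, t.orderEmbOfFin ht 2,
    hf (by decide), hf (by decide), ?_⟩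
  rw [← Finset.coe_inj, ← Finset.range_orderEmbOfFin t ht]
  ext x
  simp only [Set.mem_range, Fin.exists_fin_succ, Fin.exists_fin_zero, Finset.coe_insert,
    Finset.coe_singleton, Set.mem_insert_iff, Set.mem_singleton_iff, or_false]
  exact or_congr eq_comm (or_congr eq_comm eq_comm)

theorem Finset.eq_insert_insert_singleton_of_card_eq_three {α : Type*} [DecidableEq α]
    {t : Finset α} (ht : t.card = 3) {x y z : α} (hx : x ∈ t) (hy : y ∈ t) (hz : z ∈ t)
    (hxy : x ≠ y) (hxz : x ≠ z) (hyz : y ≠ z) : t = {x, y, z} :=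
  (Finset.eq_of_subset_of_card_le (by simp [Finset.insert_subset_iff, hx, hy, hz])
    (ht.trans (Finset.card_eq_three.mpr ⟨x, y, z, hxy, hxz, hyz, rfl⟩).symm).le).symm

theorem Finset.exists_mem_notMem_of_ncard_lt {α : Type*} {t : Finset α} {U : Set α}
    (h : {x | x ∈ t ∧ x ∈ U}.ncard < t.card) : ∃ x ∈ t, x ∉ U := by
  by_contra! hall
  have : {x | x ∈ t ∧ x ∈ U} = (t : Set α) :=
    Set.ext fun x => ⟨And.left, fun hx => ⟨hx, hall x hx⟩⟩
  rw [this, Set.ncard_coe_finset] at h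
  exact lt_irrefl _ h

theorem rank_eq_of_mem {W : Type u} {G : SimpleGraph W} {pref : W → W → ℕ}
    {M : Set (Sym2 W)} {v w : W} (hw : s(v, w) ∈ M)
    (hunique : ∀ w', s(v, w') ∈ M → w' = w) :
    rank G pref M v = pref v w := by
  have hex : ∃ w, s(v, w) ∈ M := ⟨w, hw⟩
  rw [rank, dif_pos hex, hunique _ hex.choose_spec]

theorem GMgraph_le {W : Type u} (G : SimpleGraph W) (pref : W → W → ℕ) (M : Set (Sym2 W)) :
    GMgraph G pref M ≤ G :=
  fun _ _ h => h.1

theorem IsPVCSolution.notMem_of_mem_pair {V : Type u} {G : SimpleGraph V} {P : Set (Sym2 V)}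
    {T : Set (Finset V)} {U : Set V} (hU : IsPVCSolution G P T U) {x y : V}
    (he : s(x, y) ∈ P) (hxy : x ≠ y) (hx : x ∈ U) : y ∉ U := by
  intro hy
  have hpair : {z | z ∈ s(x, y) ∧ z ∈ U} = {x, y} := by
    ext z
    simp only [Set.mem_ofPred_eq, Sym2.mem_iff, Set.mem_insert_iff, Set.mem_singleton_iff]
    constructor
    · exact And.left
    · rintro (rfl | rfl) <;> simp [*]
  have := hU.2.1 _ he
  rw [hpair, Set.ncard_pair hxy] at this
  omega

namespace Reduction

variable {V : Type u} [LinearOrder V] (R : Reduction V) (U : Set V)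

theorem pref_d_ne {t : Finset V} (ht : t ∈ R.T) {x y z : V} (hx : x ∈ t) (hy : y ∈ t)
    (hz : z ∈ t) (hxy : x ≠ y) (hxz : x ≠ z) (hyz : y ≠ z) :
    R.pref (.d x) (.d y) ≠ R.pref (.d x) (.d z) := by
  obtain ⟨p, q, r, hpq, hqr, rfl⟩ :=
    Finset.exists_lt_lt_eq_of_card_eq_three (R.ispvc.2.2.2.1 _ ht)
  obtain ⟨-, -, -, -, -, -, hpq', hpr', hqr', hqp', hrp', hrq'⟩ :=
    R.pref_tri _ ht p q r rfl hpq hqr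
  simp only [Finset.mem_insert, Finset.mem_singleton] at hx hy hz
  rcases hx with rfl | rfl | rfl <;> rcases hy with rfl | rfl | rfl <;>
    rcases hz with rfl | rfl | rfl <;> simp_all

theorem mem_mstar_va_vb (hU : IsPVCSolution R.G R.P R.T U) {i : V} (hi : i ∈ U) :
    s(R.va i, R.vb i) ∈ R.Mstar U := by
  rcases R.ispvc.2.2.2.2.2.2.1 i with ⟨e, he, hie⟩ | ⟨t, ht, hit⟩
  · obtain ⟨z, rfl⟩ := Sym2.mem_iff_exists.mp hie
    have hiz : i ≠ z := (R.ispvc.2.1 he).ne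
    have hz : z ∉ U := hU.notMem_of_mem_pair he hiz hi
    exact Or.inr (Or.inl ⟨z, i, Sym2.eq_swap ▸ he, he, hz, hi, Or.inr (Or.inr (Or.inl rfl))⟩)
  · have hcard := R.ispvc.2.2.2.1 t ht
    obtain ⟨x, hxt, hxU⟩ := Finset.exists_mem_notMem_of_ncard_lt (U := U)
      (by rw [hU.2.2 t ht, hcard]; norm_num)
    obtain ⟨z, ⟨hzt, hzU⟩, hzi⟩ :=
      Set.exists_ne_of_one_lt_ncard (by rw [hU.2.2 t ht]; norm_num) i
    have hxi : x ≠ i := fun h => hxU (h ▸ hi)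
    have hxz : x ≠ z := fun h => hxU (h ▸ hzU)
    have htxiz :=
      Finset.eq_insert_insert_singleton_of_card_eq_three hcard hxt hit hzt hxi hxz hzi.symm
    rcases (R.pref_d_ne ht hxt hit hzt hxi hxz hzi.symm).lt_or_gt with h | h
    · exact Or.inr (Or.inr ⟨t, ht, x, i, z, htxiz, hxU, hi, hzU, hzi.symm, h,
        Or.inr (Or.inr (Or.inl rfl))⟩)
    · exact Or.inr (Or.inr ⟨t, ht, x, z, i, htxiz.trans (by rw [Finset.pair_comm]), hxU, hzU, hi,
        hzi, h, Or.inr (Or.inr (Or.inr (Or.inl rfl)))⟩)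

theorem eq_vu_of_mem_mstar {i j : V} (h : R.G.Adj i j) {w : R.HV}
    (hw : s(R.vu i j h, w) ∈ R.Mstar U) : w = R.vu j i h.symm := by
  rcases hw with ⟨_, _, _, he⟩ | ⟨_, _, _, _, _, _, he | he | he | he | he⟩ |
    ⟨_, _, _, _, _, _, _, _, _, _, _, he | he | he | he | he | he⟩
  all_goals
    simp only [vu, va, vb, vc, vd, vf, Sym2.eq_iff, Subtype.ext_iff, reduceCtorEq,
      Gad.u.injEq, false_and, or_false] at he
  obtain ⟨⟨rfl, rfl⟩, hval⟩ | ⟨⟨rfl, rfl⟩, hval⟩ := he <;> exact Subtype.ext hval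

theorem eq_va_of_mem_mstar {i : V} (hi : i ∈ U) {w : R.HV}
    (hw : s(R.vb i, w) ∈ R.Mstar U) : w = R.va i := by
  rcases hw with ⟨_, _, _, he⟩ | ⟨_, _, _, _, hx, _, he | he | he | he | he⟩ |
    ⟨_, _, _, _, _, _, hx, _, _, _, _, he | he | he | he | he | he⟩
  all_goals
    simp only [vu, va, vb, vc, vd, vf, Sym2.eq_iff, Subtype.ext_iff, reduceCtorEq,
      Gad.b.injEq, false_and, false_or, or_false] at he
  all_goals
    obtain ⟨rfl, hval⟩ := he
    first | exact (hx hi).elim | exact Subtype.ext hval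

theorem rank_vu {i j : V} (h : R.G.Adj i j) : rank R.H R.prefH (R.Mstar U) (R.vu i j h) = 1 :=
  (rank_eq_of_mem (Or.inl ⟨i, j, h, rfl⟩) fun _ => R.eq_vu_of_mem_mstar U h).trans
    (R.pref_uu i j h)

theorem rank_vb (hU : IsPVCSolution R.G R.P R.T U) {i : V} (hi : i ∈ U) :
    rank R.H R.prefH (R.Mstar U) (R.vb i) = 1 :=
  (rank_eq_of_mem (Sym2.eq_swap ▸ R.mem_mstar_va_vb U hU hi)
    fun _ => R.eq_va_of_mem_mstar U hi).trans (R.pref_ba i)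

theorem not_adj_vu_vb (hU : IsPVCSolution R.G R.P R.T U) {i j : V} (h : R.G.Adj i j)
    (hi : i ∈ U) : ¬ (GMgraph R.H R.prefH (R.Mstar U)).Adj (R.vu i j h) (R.vb i) := by
  rintro ⟨-, hmem | hplus⟩
  · exact absurd (congrArg Subtype.val (R.eq_vu_of_mem_mstar U h hmem)) (by simp [vb, vu])
  · refine hplus ⟨R.vb i, R.vu i j h, Sym2.eq_swap, ?_, ?_⟩
    · have h2 : 2 ≤ R.prefH (R.vb i) (R.vu i j h) := ((R.pref_bu i).mapsTo ⟨j, h, rfl⟩).1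
      rw [R.rank_vb U hU hi]
      omega
    · have h2 : R.prefH (R.vu i j h) (R.vb i) = 2 := R.pref_ub i j h
      rw [R.rank_vu U h]
      omega

theorem neighborSet_vu_subset {i j : V} (h : R.G.Adj i j) :
    R.H.neighborSet (R.vu i j h) ⊆ {R.vu j i h.symm, R.vb i} := by
  rintro ⟨w, hw⟩ ⟨-, hb | hb⟩
  · cases hb
    exact Or.inl rfl
  · cases hb
    · exact Or.inl rfl
    · exact Or.inr rfl

theorem adj_vb_of_vu_mem_support {i j : V} (h : R.G.Adj i j)
    {x : R.HV} {p : (GMgraph R.H R.prefH (R.Mstar U)).Walk x x} (hp : p.IsCycle)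
    (hv : R.vu i j h ∈ p.support) :
    (GMgraph R.H R.prefH (R.Mstar U)).Adj (R.vu i j h) (R.vb i) ∧
      R.vu j i h.symm ∈ p.support := by
  have hN := (neighborSet_mono (GMgraph_le R.H R.prefH (R.Mstar U)) _).trans
    (R.neighborSet_vu_subset h)
  exact ⟨(hp.adj_of_neighborSet_subset_pair hv (Set.pair_comm _ _ ▸ hN)).1,
    (hp.adj_of_neighborSet_subset_pair hv hN).2⟩

end Reduction

/-- No alternating cycle in `H_{M*}` contains a vertex `u^e_i`. -/
theorem no_alt_cycle_through_u {V : Type u} [LinearOrder V] (R : Reduction V)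
    (U : Set V) (hU : IsPVCSolution R.G R.P R.T U) :
    ¬ ∃ (x : R.HV) (p : (GMgraph R.H R.prefH (R.Mstar U)).Walk x x),
      IsAltCycle (R.Mstar U) p ∧ ∃ v ∈ p.support, ∃ i j : V, v.1 = Gad.u i j := by
  rintro ⟨x, p, ⟨hp, -⟩, ⟨_, hij⟩, hv, i, j, rfl⟩
  obtain ⟨hbi, hvj⟩ := R.adj_vb_of_vu_mem_support U hij hp hv
  obtain ⟨hbj, -⟩ := R.adj_vb_of_vu_mem_support U hij.symm hp hvj
  rcases hU.1 hij with hi | hj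
  · exact R.not_adj_vu_vb U hU hij hi hbi
  · exact R.not_adj_vu_vb U hU hij.symm hj hbj
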